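/- arXiv:2111.04902 — 6 statements merged into one kernel-verified Lean document; each statement's English description precedes it below -/
import Mathlib

section
/- Let G be a finite simple graph and M a nonempty set of vertices of G. Then the expansion (G/M) ·_[M] G[M] equals G if and only if every vertex v ∉ M is adjacent to all vertices of M or to none of them. -/
/-- The expansion `(G/M) ·_[M] G[M]` of a simple graph `G` at a nonempty vertex set
`M`, described directly on the vertex set of `G`: two vertices outside `M` are
adjacent iff they are adjacent in `G` (equivalently in `G/M`), two vertices of `M`
are adjacent iff they are adjacent in `G` (i.e. in `G[M]`), and a vertex `v ∉ M` is
adjacent to a vertex `m ∈ M` iff `v` is adjacent to `[M]` in `G/M`, i.e. iff `v` is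
adjacent in `G` to some vertex of `M`. -/
def graphExpansion {V : Type*} (G : SimpleGraph V) (M : Set V) : SimpleGraph V where
  Adj u v :=
    ((u ∈ M ↔ v ∈ M) ∧ G.Adj u v) ∨
    (u ∉ M ∧ v ∈ M ∧ ∃ w ∈ M, G.Adj u w) ∨
    (u ∈ M ∧ v ∉ M ∧ ∃ w ∈ M, G.Adj v w)
  symm := by
    constructor
    intro u v h
    rcases h with ⟨h1, h2⟩ | ⟨h1, h2, h3⟩ | ⟨h1, h2, h3⟩
    · exact Or.inl ⟨h1.symm, h2.symm⟩
    · exact Or.inr (Or.inr ⟨h2, h1, h3⟩)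
    · exact Or.inr (Or.inl ⟨h2, h1, h3⟩)
  loopless := by
    constructor
    intro u h
    rcases h with ⟨_, h2⟩ | ⟨h1, h2, _⟩ | ⟨h1, h2, _⟩
    · exact G.irrefl h2
    · exact h1 h2
    · exact h2 h1

/-! The expansion always contains `G`, and the only edges it can add join a vertex `v ∉ M`
that has some neighbour in `M` to the vertices of `M`; so it equals `G` exactly when each such
`v` is already adjacent to all of `M`. -/

section

variable {V : Type*} (G : SimpleGraph V) (M : Set V)

theorem le_graphExpansion : G ≤ graphExpansion G M := by
  intro u v huv
  by_cases hu : u ∈ M <;> by_cases hv : v ∈ M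
  · exact Or.inl ⟨iff_of_true hu hv, huv⟩
  · exact Or.inr (Or.inr ⟨hu, hv, u, hu, huv.symm⟩)
  · exact Or.inr (Or.inl ⟨hu, hv, v, hv, huv⟩)
  · exact Or.inl ⟨iff_of_false hu hv, huv⟩

theorem graphExpansion_le_iff :
    graphExpansion G M ≤ G ↔ ∀ v ∉ M, ∀ m ∈ M, (∃ w ∈ M, G.Adj v w) → G.Adj v m := by
  constructor
  · intro h v hv m hm hvM
    exact h (Or.inr (Or.inl ⟨hv, hm, hvM⟩))
  · rintro h u v (⟨-, huv⟩ | ⟨hu, hv, huM⟩ | ⟨hu, hv, hvM⟩)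
    · exact huv
    · exact h u hu v hv huM
    · exact (h v hv u hu hvM).symm

end

theorem Set.forall_mem_imp_or_forall_mem_not {α : Type*} (s : Set α) (p : α → Prop) :
    (∀ a ∈ s, (∃ b ∈ s, p b) → p a) ↔ (∀ a ∈ s, p a) ∨ ∀ a ∈ s, ¬ p a := by
  by_cases hp : ∃ b ∈ s, p b
  · obtain ⟨b, hb, hpb⟩ := hp
    refine ⟨fun h => Or.inl fun a ha => h a ha ⟨b, hb, hpb⟩, ?_⟩
    rintro (hall | hnone) a ha -
    · exact hall a ha
    · exact absurd hpb (hnone b hb)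
  · exact iff_of_true (fun a ha hex => absurd hex hp) (Or.inr fun a ha hpa => hp ⟨a, ha, hpa⟩)

theorem stmt0_general {V : Type*} (G : SimpleGraph V) (M : Set V) :
    graphExpansion G M = G ↔
      ∀ v ∉ M, (∀ m ∈ M, G.Adj v m) ∨ (∀ m ∈ M, ¬ G.Adj v m) := by
  rw [le_antisymm_iff, and_iff_left (le_graphExpansion G M), graphExpansion_le_iff]
  exact forall₂_congr fun v _ => Set.forall_mem_imp_or_forall_mem_not M (G.Adj v)

/-- For a finite simple graph `G` and a nonempty set `M` of
vertices, the expansion `(G/M) ·_[M] G[M]` equals `G` iff every vertex outside `M`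
is adjacent to all vertices of `M` or to none of them. -/
theorem stmt0 {V : Type*} [Fintype V] (G : SimpleGraph V) (M : Set V) (hM : M.Nonempty) :
    graphExpansion G M = G ↔
      ∀ v ∉ M, (∀ m ∈ M, G.Adj v m) ∨ (∀ m ∈ M, ¬ G.Adj v m) :=
  stmt0_general G M
end

section
/- Let Z = (Q, Σ, δ, s) be an FSM and M a nonempty subset of Q. Then the following are equivalent: (i) M is a module of Z, i.e., all entrances of M coincide and, if s ∈ M, every entrance of M equals s, and for each x ∈ Σ, if M has an x-exit then M has exactly one x-exit and δ(u, x) is defined for every u ∈ M; (ii) there exists q ∈ M such that the contraction relation of M is single-valued (so the contraction Z/M is a well-defined FSM) and the expansion (Z/M) ·_[M] Z[M, q] equals Z. -/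
open Classical

universe u v

variable {Q : Type u} {E : Type v}

/-- `u` is an entrance of `M`: `u ∈ M` receives an arc from outside `M`. -/
def IsEntrance (δ : Q → E → Option Q) (M : Set Q) (u : Q) : Prop :=
  u ∈ M ∧ ∃ x : E, ∃ v : Q, v ∉ M ∧ δ v x = some u

/-- `v` is an `x`-exit of `M`. -/
def IsExit (δ : Q → E → Option Q) (M : Set Q) (x : E) (v : Q) : Prop :=
  v ∉ M ∧ ∃ u ∈ M, δ u x = some v

/-- `M` is a module of the FSM `(Q, E, δ, s)`. -/
def IsFsmModule (δ : Q → E → Option Q) (s : Q) (M : Set Q) : Prop :=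
  M.Nonempty ∧
  (∀ u v : Q, IsEntrance δ M u → IsEntrance δ M v → u = v) ∧
  (s ∈ M → ∀ u : Q, IsEntrance δ M u → u = s) ∧
  ∀ x : E, (∃ v, IsExit δ M x v) →
    ((∀ v w : Q, IsExit δ M x v → IsExit δ M x w → v = w) ∧ ∀ u ∈ M, (δ u x).isSome)

/-- `M` contains an `x`-cycle. -/
def HasXCycleIn (δ : Q → E → Option Q) (x : E) (M : Set Q) : Prop :=
  ∃ q ∈ M, Relation.TransGen (fun a b => a ∈ M ∧ δ a x = some b) q q

/-- `M` is a thin module. -/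
def IsThinModule (δ : Q → E → Option Q) (s : Q) (M : Set Q) : Prop :=
  IsFsmModule δ s M ∧ ∀ x : E, (¬ ∃ v, IsExit δ M x v) ∨ ¬ HasXCycleIn δ x M

/-- One transition step of the FSM, as a digraph arc. -/
def FsmStep (δ : Q → E → Option Q) (u v : Q) : Prop := ∃ x : E, δ u x = some v

/-- Reachability by a directed path. -/
def Reaches (δ : Q → E → Option Q) : Q → Q → Prop := Relation.ReflTransGen (FsmStep δ)

/-- Every state is reachable from the start state. -/
def Accessible (δ : Q → E → Option Q) (s : Q) : Prop := ∀ q : Q, Reaches δ s q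

/-- `σ` is the start node of the module `M`. -/
def IsStartNode (δ : Q → E → Option Q) (s : Q) (M : Set Q) (σ : Q) : Prop :=
  (s ∈ M ∧ σ = s) ∨ (s ∉ M ∧ IsEntrance δ M σ)

/-- Two sets overlap. -/
def Overlap {α : Type*} (X Y : Set α) : Prop :=
  (X ∩ Y).Nonempty ∧ ¬ X ⊆ Y ∧ ¬ Y ⊆ X

/-- A collection of sets is overlapping: across every partition into two
nonempty blocks there is an overlapping pair. -/
def OverlapColl {α : Type*} (S : Set (Set α)) : Prop :=
  ∀ T ⊆ S, T.Nonempty → (S \ T).Nonempty → ∃ a ∈ T, ∃ b ∈ S \ T, Overlap a b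

/-- `M` is decomposable with respect to the family `F`. -/
def Decomposable {α : Type*} (F : Set (Set α)) (M : Set α) : Prop :=
  ∃ S : Set (Set α), S ⊆ F ∧ OverlapColl S ∧ ⋃₀ S = M ∧ ∃ a ∈ S, ∃ b ∈ S, a ≠ b

/-- `M` is an indecomposable member of the family `F`. -/
def Indecomposable {α : Type*} (F : Set (Set α)) (M : Set α) : Prop :=
  M ∈ F ∧ ¬ Decomposable F M

/-- `M` is an indecomposable thin module of the FSM. -/
def IndecompThin (δ : Q → E → Option Q) (s : Q) (M : Set Q) : Prop :=
  Indecomposable {N : Set Q | IsThinModule δ s N} M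

/-- The contraction relation of `M`: the transition relation of `Z/M` on the state
set `(Q \ M) ∪ {[M]}`, where the fresh state `[M]` is modelled by `none` and a state
`u ∉ M` by `some u`. -/
def ContrRel (δ : Q → E → Option Q) (M : Set Q) : Option Q → E → Option Q → Prop :=
  fun u x v =>
    match u, v with
    | some u, some v => u ∉ M ∧ v ∉ M ∧ δ u x = some v
    | some u, none => u ∉ M ∧ ∃ m ∈ M, δ u x = some m
    | none, some v => v ∉ M ∧ ∃ w ∈ M, δ w x = some v
    | none, none => False

/-- The transition function of the expansion `(Z/M) ·_[M] Z[M, q]`, described as a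
relation on the state set `Q` (assuming the contraction relation is single-valued):
for `u ∉ M` the transitions of `Z/M` are used, transitions of `Z/M` into `[M]`
being redirected to the start state `q` of `Z[M, q]`; for `u ∈ M` the transitions
of `Z[M, q]` are used when defined, and otherwise the transitions of `Z/M` out of
`[M]` (which never lead back to `[M]`). -/
def ExpRel (δ : Q → E → Option Q) (M : Set Q) (q : Q) (u : Q) (x : E) (v : Q) : Prop :=
  (u ∈ M ∧ ((v ∈ M ∧ δ u x = some v) ∨
    ((¬ ∃ m ∈ M, δ u x = some m) ∧ v ∉ M ∧ ∃ w ∈ M, δ w x = some v))) ∨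
  (u ∉ M ∧ ((v ∉ M ∧ δ u x = some v) ∨ (v = q ∧ ∃ m ∈ M, δ u x = some m)))

/-! The expansion can reproduce an arc `u → m` entering `M` only as `u → q`, so all entrances
equal `q`; and it reproduces an arc from `u ∈ M` leaving `M` only through the exits of `[M]`
in `Z/M`, so exits must be unique and every state of `M` must have the letter defined. -/

section Module

variable {δ : Q → E → Option Q} {M : Set Q}

/-- Arcs leaving a state `u ∉ M` are determined by `δ u x`, so only `[M]` can branch. -/
theorem contrRel_functional_iff :
    (∀ (u : Option Q) (x : E) (v w : Option Q),
        ContrRel δ M u x v → ContrRel δ M u x w → v = w) ↔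
      ∀ (x : E) (v w : Q), IsExit δ M x v → IsExit δ M x w → v = w := by
  constructor
  · intro h x v w hv hw
    exact Option.some_injective _ (h none x (some v) (some w) hv hw)
  · intro h u x v w hv hw
    rcases u with _ | u <;> rcases v with _ | v <;> rcases w with _ | w <;>
      simp only [ContrRel] at hv hw
    all_goals first | exact congrArg some (h x _ _ hv hw) | grind

theorem exists_mem_forall_isEntrance_eq (hM : M.Nonempty) {s : Q}
    (hent : ∀ u v : Q, IsEntrance δ M u → IsEntrance δ M v → u = v)
    (hents : s ∈ M → ∀ u : Q, IsEntrance δ M u → u = s) :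
    ∃ q ∈ M, (s ∈ M → q = s) ∧ ∀ m, IsEntrance δ M m → m = q := by
  by_cases hs : s ∈ M
  · exact ⟨s, hs, fun _ => rfl, hents hs⟩
  by_cases he : ∃ m, IsEntrance δ M m
  · obtain ⟨m, hm⟩ := he
    exact ⟨m, hm.1, fun h => absurd h hs, fun m' hm' => hent m' m hm' hm⟩
  · obtain ⟨q, hq⟩ := hM
    exact ⟨q, hq, fun h => absurd h hs, fun m hm => absurd ⟨m, hm⟩ he⟩

theorem expRel_iff_of_isEntrance_eq {q : Q} (hentr : ∀ m, IsEntrance δ M m → m = q)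
    (hexit : ∀ x : E, (∃ v, IsExit δ M x v) →
      (∀ v w : Q, IsExit δ M x v → IsExit δ M x w → v = w) ∧ ∀ u ∈ M, (δ u x).isSome)
    (u : Q) (x : E) (v : Q) : ExpRel δ M q u x v ↔ δ u x = some v := by
  by_cases hu : u ∈ M
  · simp only [ExpRel, hu, not_true_eq_false, false_and, or_false, true_and]
    constructor
    · rintro (⟨-, hd⟩ | ⟨hnot, hv⟩)
      · exact hd
      -- `u` has some `x`-successor, which must leave `M` and hence be the unique `x`-exit
      obtain ⟨huniq, htotal⟩ := hexit x ⟨v, hv⟩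
      obtain ⟨z, hz⟩ := Option.isSome_iff_exists.mp (htotal u hu)
      have hzM : z ∉ M := fun hzM => hnot ⟨z, hzM, hz⟩
      rwa [← huniq z v ⟨hzM, u, hu, hz⟩ hv]
    · intro hd
      by_cases hv : v ∈ M
      · exact Or.inl ⟨hv, hd⟩
      · refine Or.inr ⟨?_, hv, u, hu, hd⟩
        rintro ⟨m, hm, hdm⟩
        exact hv (Option.some_injective _ (hd.symm.trans hdm) ▸ hm)
  · simp only [ExpRel, hu, false_and, not_false_eq_true, true_and, false_or]
    constructor
    · rintro (⟨-, hd⟩ | ⟨rfl, m, hm, hd⟩)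
      · exact hd
      · rwa [← hentr m ⟨hm, x, u, hu, hd⟩]
    · intro hd
      by_cases hv : v ∈ M
      · exact Or.inr ⟨hentr v ⟨hv, x, u, hu, hd⟩, v, hv, hd⟩
      · exact Or.inl ⟨hv, hd⟩

theorem isEntrance_eq_of_expRel_iff {q : Q}
    (hexp : ∀ (u : Q) (x : E) (v : Q), ExpRel δ M q u x v ↔ δ u x = some v) {m : Q}
    (hm : IsEntrance δ M m) : m = q := by
  obtain ⟨hmM, x, a, haM, ha⟩ := hm
  rcases (hexp a x m).2 ha with ⟨haM', -⟩ | ⟨-, ⟨hmM', -⟩ | ⟨hmq, -⟩⟩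
  · exact absurd haM' haM
  · exact absurd hmM hmM'
  · exact hmq

theorem isSome_of_expRel_iff {q : Q}
    (hexp : ∀ (u : Q) (x : E) (v : Q), ExpRel δ M q u x v ↔ δ u x = some v) {x : E} {v u : Q}
    (hv : IsExit δ M x v) (hu : u ∈ M) : (δ u x).isSome := by
  by_cases hd : ∃ m ∈ M, δ u x = some m
  · obtain ⟨m, -, hm⟩ := hd
    simp [hm]
  · simp [(hexp u x v).1 (Or.inl ⟨hu, Or.inr ⟨hd, hv⟩⟩)]

end Module

theorem stmt1_general (δ : Q → E → Option Q) (s : Q) (M : Set Q) (hM : M.Nonempty) :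
    IsFsmModule δ s M ↔
      ∃ q ∈ M,
        (∀ (u : Option Q) (x : E) (v w : Option Q),
            ContrRel δ M u x v → ContrRel δ M u x w → v = w) ∧
        (∀ (u : Q) (x : E) (v : Q), ExpRel δ M q u x v ↔ δ u x = some v) ∧
        (s ∈ M → q = s) := by
  constructor
  · rintro ⟨-, hent, hents, hexit⟩
    obtain ⟨q, hqM, hqs, hentr⟩ := exists_mem_forall_isEntrance_eq hM hent hents
    exact ⟨q, hqM, contrRel_functional_iff.2 fun x v w hv => (hexit x ⟨v, hv⟩).1 v w hv,
      expRel_iff_of_isEntrance_eq hentr hexit, hqs⟩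
  · rintro ⟨q, -, hcontr, hexp, hqs⟩
    have hentr : ∀ {m}, IsEntrance δ M m → m = q := isEntrance_eq_of_expRel_iff hexp
    refine ⟨hM, fun u v hu hv => (hentr hu).trans (hentr hv).symm,
      fun hs u hu => (hentr hu).trans (hqs hs), fun x ⟨v, hv⟩ => ?_⟩
    exact ⟨contrRel_functional_iff.1 hcontr x, fun u hu => isSome_of_expRel_iff hexp hv hu⟩

/-- For an FSM `Z = (Q, E, δ, s)` and a nonempty `M ⊆ Q`, `M` is a
module of `Z` iff there is a `q ∈ M` such that the contraction relation of `M` is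
single-valued (so `Z/M` is a well-defined FSM) and the expansion
`(Z/M) ·_[M] Z[M, q]` equals `Z`, i.e. its transition relation agrees exactly with
`δ` and its start state (`q` if `s ∈ M`, and `s` otherwise) equals `s`. -/
theorem stmt1 [Fintype Q] (δ : Q → E → Option Q) (s : Q) (M : Set Q) (hM : M.Nonempty) :
    IsFsmModule δ s M ↔
      ∃ q ∈ M,
        (∀ (u : Option Q) (x : E) (v w : Option Q),
            ContrRel δ M u x v → ContrRel δ M u x w → v = w) ∧
        (∀ (u : Q) (x : E) (v : Q), ExpRel δ M q u x v ↔ δ u x = some v) ∧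
        (s ∈ M → q = s) :=
  stmt1_general δ s M hM
end

section
/- Let Z be an accessible FSM, X a module of Z with start node σ_X, and Z[X] the FSM with state set X, start state σ_X, and transitions δ restricted to pairs staying in X (δ_X(u, x) = v iff u, v ∈ X and δ(u, x) = v). Then for every Y ⊆ X, Y is a module of Z if and only if Y is a module of Z[X]. -/
open Classical

universe u v

variable {Q : Type u} {E : Type v}

/-- The transition function of the restriction `Z[X]`: transitions of `δ` that
start and stay in `X`. -/
noncomputable def restrictδ (δ : Q → E → Option Q) (X : Set Q) : Q → E → Option Q :=
  fun u x => (δ u x).bind (fun v => if u ∈ X ∧ v ∈ X then some v else none)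

/-!
Inside `X` the machines `Z` and `Z[X]` have the same arcs, so for `Y ⊆ X` they differ only
in arcs entering `Y` from outside `X` and arcs leaving `Y` to outside `X`.

An arc of the first kind ends at an entrance of the module `X`, i.e. at `σ`; this is exactly
the node that `Z[X]` declares as its start state. Hence the entrances of `Y` together with the
start state (when it lies in `Y`) form the same set in both machines, and the entrance
conditions agree.

An arc of the second kind ends at an exit of `X`. If `Y` has an `x`-exit outside `X`, then the
exit condition of `X` makes `δ(·, x)` total on `Y` with a unique target outside `X`, and the
exit condition of `Y` in `Z[X]` forbids further `x`-exits inside `X`. If `Y` has an `x`-exit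
inside `X`, then totality in `Z[X]` forces every `x`-arc out of `Y` to stay in `X`.
-/

section Restriction

variable {δ : Q → E → Option Q} {s σ : Q} {X Y M : Set Q} {x : E} {u v : Q}

def startEntrances (δ : Q → E → Option Q) (s : Q) (M : Set Q) : Set Q :=
  {u | IsEntrance δ M u ∨ (u = s ∧ s ∈ M)}

def ExitCondition (δ : Q → E → Option Q) (M : Set Q) (x : E) : Prop :=
  (∃ v, IsExit δ M x v) →
    (∀ v w : Q, IsExit δ M x v → IsExit δ M x w → v = w) ∧ ∀ u ∈ M, (δ u x).isSome

theorem isFsmModule_iff :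
    IsFsmModule δ s M ↔
      M.Nonempty ∧ (startEntrances δ s M).Subsingleton ∧ ∀ x, ExitCondition δ M x := by
  refine and_congr_right fun _ => ?_
  rw [← and_assoc]
  refine and_congr_left fun _ => ⟨?_, fun h => ⟨?_, ?_⟩⟩
  · rintro ⟨hent, hs⟩ u (hu | ⟨rfl, hu⟩) v (hv | ⟨rfl, hv⟩)
    exacts [hent u v hu hv, hs hv u hu, (hs hu v hv).symm, rfl]
  · exact fun u v hu hv => h (Or.inl hu) (Or.inl hv)
  · exact fun hs u hu => h (Or.inl hu) (Or.inr ⟨rfl, hs⟩)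

theorem IsFsmModule.eq_of_isEntrance_of_isStartNode (hX : IsFsmModule δ s X)
    (hσ : IsStartNode δ s X σ) (hu : IsEntrance δ X u) : u = σ := by
  rcases hσ with ⟨hs, rfl⟩ | ⟨-, hσ⟩
  exacts [hX.2.2.1 hs u hu, hX.2.1 u σ hu hσ]

theorem IsStartNode.eq_of_mem (hσ : IsStartNode δ s X σ) (hs : s ∈ X) : σ = s := by
  rcases hσ with ⟨-, rfl⟩ | ⟨hs', -⟩
  exacts [rfl, absurd hs hs']

theorem IsExit.of_subset (hc : IsExit δ Y x v) (hYX : Y ⊆ X) (hvX : v ∉ X) :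
    IsExit δ X x v :=
  ⟨hvX, hc.2.imp fun _ hu => ⟨hYX hu.1, hu.2⟩⟩

theorem restrictδ_eq_some_iff :
    restrictδ δ X u x = some v ↔ δ u x = some v ∧ u ∈ X ∧ v ∈ X := by
  cases h : δ u x with
  | none => simp [restrictδ, h]
  | some w =>
    by_cases hw : u ∈ X ∧ w ∈ X
    · simp only [restrictδ, h, Option.bind_some, if_pos hw, Option.some.injEq]
      exact ⟨fun hwv => ⟨hwv, hwv ▸ hw⟩, And.left⟩
    · simp only [restrictδ, h, Option.bind_some, if_neg hw, Option.some.injEq]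
      exact ⟨nofun, fun ⟨hwv, hv⟩ => absurd (hwv ▸ hv) hw⟩

theorem isSome_restrictδ_iff (hu : u ∈ X) :
    (restrictδ δ X u x).isSome ↔ ∃ v ∈ X, δ u x = some v := by
  simp only [Option.isSome_iff_exists, restrictδ_eq_some_iff, hu, true_and]
  exact exists_congr fun _ => and_comm

theorem isEntrance_restrictδ_iff (hYX : Y ⊆ X) :
    IsEntrance (restrictδ δ X) Y u ↔ u ∈ Y ∧ ∃ x, ∃ v ∈ X, v ∉ Y ∧ δ v x = some u := by
  refine and_congr_right fun hu => exists_congr fun x => ?_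
  simp only [restrictδ_eq_some_iff, hYX hu, and_true]
  exact ⟨fun ⟨v, hvY, hδ, hvX⟩ => ⟨v, hvX, hvY, hδ⟩, fun ⟨v, hvX, hvY, hδ⟩ => ⟨v, hvY, hδ, hvX⟩⟩

theorem isExit_restrictδ_iff (hYX : Y ⊆ X) :
    IsExit (restrictδ δ X) Y x v ↔ IsExit δ Y x v ∧ v ∈ X := by
  simp only [IsExit, restrictδ_eq_some_iff]
  constructor
  · rintro ⟨hvY, u, hu, hδ, -, hvX⟩
    exact ⟨⟨hvY, u, hu, hδ⟩, hvX⟩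
  · rintro ⟨⟨hvY, u, hu, hδ⟩, hvX⟩
    exact ⟨hvY, u, hu, hδ, hYX hu, hvX⟩

theorem startEntrances_restrictδ (hX : IsFsmModule δ s X) (hσ : IsStartNode δ s X σ)
    (hYX : Y ⊆ X) : startEntrances (restrictδ δ X) σ Y = startEntrances δ s Y := by
  ext u
  simp only [startEntrances, Set.mem_ofPred_eq, isEntrance_restrictδ_iff hYX]
  constructor
  · rintro (⟨hu, x, v, -, hvY, hδ⟩ | ⟨rfl, hσY⟩)
    · exact Or.inl ⟨hu, x, v, hvY, hδ⟩
    rcases hσ with ⟨-, rfl⟩ | ⟨-, -, x, v, hvX, hδ⟩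
    · exact Or.inr ⟨rfl, hσY⟩
    · exact Or.inl ⟨hσY, x, v, fun hvY => hvX (hYX hvY), hδ⟩
  · rintro (⟨hu, x, v, hvY, hδ⟩ | ⟨rfl, hsY⟩)
    · by_cases hvX : v ∈ X
      · exact Or.inl ⟨hu, x, v, hvX, hvY, hδ⟩
      · -- an arc from outside `X` enters `X`, so it ends at `σ`
        obtain rfl := hX.eq_of_isEntrance_of_isStartNode hσ ⟨hYX hu, x, v, hvX, hδ⟩
        exact Or.inr ⟨rfl, hu⟩
    · exact Or.inr ⟨(hσ.eq_of_mem (hYX hsY)).symm, hσ.eq_of_mem (hYX hsY) ▸ hsY⟩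

theorem ExitCondition.restrict (hY : ExitCondition δ Y x) (hYX : Y ⊆ X) :
    ExitCondition (restrictδ δ X) Y x := by
  rintro ⟨v, hv⟩
  rw [isExit_restrictδ_iff hYX] at hv
  obtain ⟨huniq, htot⟩ := hY ⟨v, hv.1⟩
  refine ⟨fun a b ha hb => huniq a b ((isExit_restrictδ_iff hYX).1 ha).1
    ((isExit_restrictδ_iff hYX).1 hb).1, fun u hu => ?_⟩
  obtain ⟨w, hw⟩ := Option.isSome_iff_exists.1 (htot u hu)
  refine (isSome_restrictδ_iff (hYX hu)).2 ⟨w, ?_, hw⟩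
  by_cases hwY : w ∈ Y
  · exact hYX hwY
  · exact huniq w v ⟨hwY, u, hu, hw⟩ hv.1 ▸ hv.2

theorem ExitCondition.of_restrict (hX : ExitCondition δ X x) (hYX : Y ⊆ X)
    (hY : ExitCondition (restrictδ δ X) Y x) : ExitCondition δ Y x := by
  rintro ⟨v, hv⟩
  obtain ⟨-, u₀, hu₀, hδv⟩ := id hv
  by_cases hvX : v ∈ X
  · obtain ⟨huniq, htot⟩ := hY ⟨v, (isExit_restrictδ_iff hYX).2 ⟨hv, hvX⟩⟩
    have htot' (u) (hu : u ∈ Y) : ∃ w ∈ X, δ u x = some w :=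
      (isSome_restrictδ_iff (hYX hu)).1 (htot u hu)
    have hexit_mem (c) (hc : IsExit δ Y x c) : c ∈ X := by
      obtain ⟨-, u, hu, hδc⟩ := hc
      obtain ⟨w, hwX, hδw⟩ := htot' u hu
      exact Option.some_injective _ (hδc.symm.trans hδw) ▸ hwX
    refine ⟨fun a b ha hb => huniq a b ((isExit_restrictδ_iff hYX).2 ⟨ha, hexit_mem a ha⟩)
      ((isExit_restrictδ_iff hYX).2 ⟨hb, hexit_mem b hb⟩), fun u hu => ?_⟩
    obtain ⟨w, -, hδw⟩ := htot' u hu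
    simp [hδw]
  · obtain ⟨hXuniq, hXtot⟩ := hX ⟨v, hv.of_subset hYX hvX⟩
    -- an `x`-exit of `Y` inside `X` would make `δ(u₀, x) = v` lie in `X`
    have hexit_notMem (c) (hc : IsExit δ Y x c) : c ∉ X := by
      intro hcX
      obtain ⟨-, htot⟩ := hY ⟨c, (isExit_restrictδ_iff hYX).2 ⟨hc, hcX⟩⟩
      obtain ⟨w, hwX, hδw⟩ := (isSome_restrictδ_iff (hYX hu₀)).1 (htot u₀ hu₀)
      exact hvX (Option.some_injective _ (hδv.symm.trans hδw) ▸ hwX)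
    exact ⟨fun a b ha hb => hXuniq a b (ha.of_subset hYX (hexit_notMem a ha))
      (hb.of_subset hYX (hexit_notMem b hb)), fun u hu => hXtot u (hYX hu)⟩

end Restriction

theorem stmt3_general (δ : Q → E → Option Q) (s : Q)
    (X : Set Q) (hX : IsFsmModule δ s X) (σ : Q) (hσ : IsStartNode δ s X σ)
    (Y : Set Q) (hYX : Y ⊆ X) :
    IsFsmModule δ s Y ↔ IsFsmModule (restrictδ δ X) σ Y := by
  have hXexit : ∀ x, ExitCondition δ X x := (isFsmModule_iff.1 hX).2.2
  rw [isFsmModule_iff, isFsmModule_iff, startEntrances_restrictδ hX hσ hYX]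
  refine and_congr_right fun _ => and_congr_right fun _ => forall_congr' fun x => ?_
  exact ⟨fun hY => hY.restrict hYX, (hXexit x).of_restrict hYX⟩

/-- Let `Z` be an accessible FSM, `X` a module of `Z` with start
node `σ`, and `Z[X]` the restriction of `Z` to `X` (with start state `σ`). Then for
every `Y ⊆ X`, `Y` is a module of `Z` iff `Y` is a module of `Z[X]`. -/
theorem stmt3 [Fintype Q] (δ : Q → E → Option Q) (s : Q) (hacc : Accessible δ s)
    (X : Set Q) (hX : IsFsmModule δ s X) (σ : Q) (hσ : IsStartNode δ s X σ)
    (Y : Set Q) (hYX : Y ⊆ X) :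
    IsFsmModule δ s Y ↔ IsFsmModule (restrictδ δ X) σ Y :=
  stmt3_general δ s X hX σ hσ Y hYX
end

section
/- Let Z be an accessible FSM, X a thin module of Z, and Y a subset of Q with X ⊆ Y. Write Y/X = (Y \ X) ∪ {[X]} for the image of Y in the contraction Z/X. Then Y is a thin module of Z if and only if Y/X is a thin module of Z/X. -/
open Classical

universe u v

variable {Q : Type u} {E : Type v}

/-- The transition function of the contraction `Z/X`, on the state set
`(Q \ X) ∪ {[X]}`, where the fresh state `[X]` is modelled by `none` and a state
`u ∉ X` by `some u` (states `some u` with `u ∈ X` are unused and isolated).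
Transitions out of `[X]` go to the `x`-exit of `X`, which is unique since `X` is a
module, so (on module arguments) this function realises exactly the contraction
relation. -/
noncomputable def contr1δ (δ : Q → E → Option Q) (X : Set Q) :
    Option Q → E → Option (Option Q)
  | some u, x =>
      if u ∈ X then none
      else (δ u x).map (fun v => if v ∈ X then (none : Option Q) else some v)
  | none, x =>
      if h : ∃ v, v ∉ X ∧ ∃ w ∈ X, δ w x = some v then some (some (Classical.choose h))
      else none

/-- The image `Y/X = (Y \ X) ∪ {[X]}` of a set `Y ⊇ X` in the contraction `Z/X`. -/
def contrSet (Y X : Set Q) : Set (Option Q) := insert none (Option.some '' (Y \ X))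


/-!
Entrances and exits of `Y/X` are the images of those of `Y`, so only totality and
acyclicity need an argument. If `Y` has an `x`-exit, then `x` is total and acyclic on `X`,
so every node of `X` reaches the `x`-exit of `X` along `x`-arcs inside `X`; hence `x`-paths
of `Y/X` lift to `x`-paths of `Y`, and an `x`-cycle of `Y/X` to one of `Y`. Conversely, an
`x`-cycle of `Y` either stays inside `X`, impossible since the thin module `X` then has an
`x`-exit, or uses an arc leaving `X` or lying outside it, and projects to an `x`-cycle of `Y/X`.
-/

namespace Relation

variable {α : Type*} {r p : α → α → Prop}

theorem TransGen.and_or_exists_not {a b : α} (h : TransGen r a b) :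
    TransGen (fun c d => r c d ∧ p c d) a b ∨
      ∃ c d, ReflTransGen r a c ∧ r c d ∧ ¬ p c d ∧ ReflTransGen r d b := by
  induction h with
  | @single b hab =>
    by_cases hp : p a b
    · exact .inl (.single ⟨hab, hp⟩)
    · exact .inr ⟨a, b, .refl, hab, hp, .refl⟩
  | @tail b c _ hbc ih =>
    rcases ih with ih | ⟨c', d', hac', hcd', hp', hd'b⟩
    · by_cases hp : p b c
      · exact .inl (ih.tail ⟨hbc, hp⟩)
      · exact .inr ⟨b, c, ReflTransGen.mono (fun _ _ h => h.1) _ _ ih.to_reflTransGen, hbc, hp,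
          .refl⟩
    · exact .inr ⟨c', d', hac', hcd', hp', hd'b.tail hbc⟩

end Relation

open Relation

section Cycles

variable {δ : Q → E → Option Q} {x : E} {M N : Set Q}

def StepIn (δ : Q → E → Option Q) (x : E) (M : Set Q) (a b : Q) : Prop :=
  a ∈ M ∧ δ a x = some b

theorem StepIn.mono (hMN : M ⊆ N) {a b : Q} (h : StepIn δ x M a b) : StepIn δ x N a b :=
  ⟨hMN h.1, h.2⟩

theorem mem_of_transGen_stepIn {a b : Q} (h : TransGen (StepIn δ x M) a b) : a ∈ M := by
  obtain ⟨c, hac, -⟩ := TransGen.head'_iff.mp h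
  exact hac.1

theorem hasXCycleIn_iff : HasXCycleIn δ x M ↔ ∃ q, TransGen (StepIn δ x M) q q :=
  ⟨fun ⟨q, _, h⟩ => ⟨q, h⟩, fun ⟨q, h⟩ => ⟨q, mem_of_transGen_stepIn h, h⟩⟩

theorem HasXCycleIn.mono (hMN : M ⊆ N) (h : HasXCycleIn δ x M) : HasXCycleIn δ x N := by
  obtain ⟨q, h⟩ := hasXCycleIn_iff.mp h
  exact hasXCycleIn_iff.mpr ⟨q, TransGen.mono (fun _ _ => StepIn.mono hMN) _ _ h⟩

theorem exists_reflTransGen_stepIn_exit [Finite Q] (htot : ∀ u ∈ M, (δ u x).isSome)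
    (hnc : ¬ HasXCycleIn δ x M) {v : Q} (hv : v ∈ M) :
    ∃ u ∈ M, ReflTransGen (StepIn δ x M) v u ∧ ∃ w ∉ M, δ u x = some w := by
  have hwf : WellFounded (fun b a => TransGen (StepIn δ x M) a b) := by
    have : IsTrans Q (fun b a => TransGen (StepIn δ x M) a b) :=
      ⟨fun _ _ _ h₁ h₂ => h₂.trans h₁⟩
    have : Std.Irrefl (fun b a => TransGen (StepIn δ x M) a b) :=
      ⟨fun a h => hnc (hasXCycleIn_iff.mpr ⟨a, h⟩)⟩
    exact Finite.wellFounded_of_trans_of_irrefl _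
  induction v using hwf.induction with
  | _ v ih =>
    obtain ⟨w, hw⟩ := Option.isSome_iff_exists.mp (htot v hv)
    by_cases hwM : w ∈ M
    · obtain ⟨u, huM, hwu, hexit⟩ := ih w (.single ⟨hv, hw⟩) hwM
      exact ⟨u, huM, .head ⟨hv, hw⟩ hwu, hexit⟩
    · exact ⟨v, hv, .refl, w, hwM, hw⟩

theorem exists_isExit_of_not_hasXCycleIn [Finite Q] (hne : M.Nonempty)
    (htot : ∀ u ∈ M, (δ u x).isSome) (hnc : ¬ HasXCycleIn δ x M) : ∃ w, IsExit δ M x w := by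
  obtain ⟨v, hv⟩ := hne
  obtain ⟨u, huM, -, w, hwM, hw⟩ := exists_reflTransGen_stepIn_exit htot hnc hv
  exact ⟨w, hwM, u, huM, hw⟩

theorem IsThinModule.not_hasXCycleIn {s : Q} (hM : IsThinModule δ s M)
    (hexit : ∃ w, IsExit δ M x w) : ¬ HasXCycleIn δ x M :=
  (hM.2 x).resolve_left (not_not_intro hexit)

end Cycles

section Contraction

variable {δ : Q → E → Option Q} {s : Q} {X Y : Set Q} {x : E}

noncomputable def contrProj (X : Set Q) (u : Q) : Option Q := if u ∈ X then none else some u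

theorem contrProj_eq_none {u : Q} : contrProj X u = none ↔ u ∈ X := by
  unfold contrProj; split <;> simp_all

theorem contrProj_eq_some {u v : Q} : contrProj X u = some v ↔ u ∉ X ∧ u = v := by
  unfold contrProj; split <;> simp_all

theorem contrProj_eq_contrProj {u v : Q} :
    contrProj X u = contrProj X v ↔ (u ∈ X ∧ v ∈ X) ∨ u = v := by
  unfold contrProj; split <;> split <;> grind

theorem none_mem_contrSet : (none : Option Q) ∈ contrSet Y X := Set.mem_insert _ _

theorem some_mem_contrSet {v : Q} : some v ∈ contrSet Y X ↔ v ∈ Y ∧ v ∉ X := by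
  simp [contrSet]

theorem contrProj_mem_contrSet (hXY : X ⊆ Y) {u : Q} : contrProj X u ∈ contrSet Y X ↔ u ∈ Y := by
  by_cases hu : u ∈ X
  · simp only [contrProj, if_pos hu, none_mem_contrSet, hXY hu]
  · rw [contrProj, if_neg hu, some_mem_contrSet]
    exact and_iff_left hu

theorem contr1δ_some_of_mem {u : Q} (hu : u ∈ X) : contr1δ δ X (some u) x = none := by
  simp [contr1δ, hu]

theorem contr1δ_some_eq_some {u : Q} (hu : u ∉ X) {w' : Option Q} :
    contr1δ δ X (some u) x = some w' ↔ ∃ v, δ u x = some v ∧ contrProj X v = w' := by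
  simp only [contr1δ, if_neg hu, Option.map_eq_some_iff, contrProj]

theorem isSome_contr1δ_some {u : Q} (hu : u ∉ X) :
    (contr1δ δ X (some u) x).isSome ↔ (δ u x).isSome := by
  simp [contr1δ, hu]

theorem contr1δ_none :
    contr1δ δ X none x = if h : ∃ v, IsExit δ X x v then some (some h.choose) else none :=
  rfl

theorem exists_of_contr1δ_none_eq_some {w' : Option Q} (h : contr1δ δ X none x = some w') :
    ∃ v, w' = some v ∧ IsExit δ X x v := by
  rw [contr1δ_none] at h
  split at h
  · exact ⟨_, (Option.some_injective _ h).symm, Classical.choose_spec ‹_›⟩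
  · cases h

theorem isSome_contr1δ_none : (contr1δ δ X none x).isSome ↔ ∃ v, IsExit δ X x v := by
  rw [contr1δ_none]
  split <;> simp_all

theorem contr1δ_none_of_isExit (hX : IsFsmModule δ s X) {v : Q} (hv : IsExit δ X x v) :
    contr1δ δ X none x = some (some v) := by
  have hex : ∃ v, IsExit δ X x v := ⟨v, hv⟩
  rw [contr1δ_none, dif_pos hex, (hX.2.2.2 x hex).1 _ _ hex.choose_spec hv]

theorem IsEntrance.of_subset (hXY : X ⊆ Y) {u : Q} (h : IsEntrance δ Y u) (hu : u ∈ X) :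
    IsEntrance δ X u :=
  let ⟨_, x, v, hvY, hv⟩ := h
  ⟨hu, x, v, fun hvX => hvY (hXY hvX), hv⟩

theorem isEntrance_contr_iff (hXY : X ⊆ Y) {u' : Option Q} :
    IsEntrance (contr1δ δ X) (contrSet Y X) u' ↔ ∃ u, contrProj X u = u' ∧ IsEntrance δ Y u := by
  constructor
  · rintro ⟨hu', x, v', hv', he⟩
    cases v' with
    | none => exact absurd none_mem_contrSet hv'
    | some v =>
      have hvX : v ∉ X := fun hvX => by simp [contr1δ_some_of_mem hvX] at he
      obtain ⟨u, hu, rfl⟩ := (contr1δ_some_eq_some hvX).mp he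
      exact ⟨u, rfl, (contrProj_mem_contrSet hXY).mp hu', x, v,
        fun hvY => hv' (some_mem_contrSet.mpr ⟨hvY, hvX⟩), hu⟩
  · rintro ⟨u, rfl, huY, x, v, hvY, hu⟩
    exact ⟨(contrProj_mem_contrSet hXY).mpr huY, x, some v,
      fun hv => hvY (some_mem_contrSet.mp hv).1,
      (contr1δ_some_eq_some fun hvX => hvY (hXY hvX)).mpr ⟨u, hu, rfl⟩⟩

theorem stepIn_contrProj (hX : IsFsmModule δ s X) (hXY : X ⊆ Y) {c d : Q}
    (h : StepIn δ x Y c d) (hcd : ¬ (c ∈ X ∧ d ∈ X)) :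
    StepIn (contr1δ δ X) x (contrSet Y X) (contrProj X c) (contrProj X d) := by
  refine ⟨(contrProj_mem_contrSet hXY).mpr h.1, ?_⟩
  by_cases hc : c ∈ X
  · have hd : d ∉ X := fun hd => hcd ⟨hc, hd⟩
    rw [contrProj_eq_none.mpr hc, contrProj_eq_some.mpr ⟨hd, rfl⟩]
    exact contr1δ_none_of_isExit hX ⟨hd, c, hc, h.2⟩
  · rw [contrProj_eq_some.mpr ⟨hc, rfl⟩]
    exact (contr1δ_some_eq_some hc).mpr ⟨d, h.2, rfl⟩

theorem reflTransGen_contrProj (hX : IsFsmModule δ s X) (hXY : X ⊆ Y) {a b : Q}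
    (h : ReflTransGen (StepIn δ x Y) a b) :
    ReflTransGen (StepIn (contr1δ δ X) x (contrSet Y X)) (contrProj X a) (contrProj X b) := by
  refine ReflTransGen.lift' (contrProj X) (fun c d hcd => ?_) _ _ h
  by_cases hcdX : c ∈ X ∧ d ∈ X
  · change ReflTransGen _ (contrProj X c) (contrProj X d)
    rw [contrProj_eq_contrProj.mpr (.inl hcdX)]
  · exact .single (stepIn_contrProj hX hXY hcd hcdX)

theorem isExit_contr_iff (hX : IsFsmModule δ s X) (hXY : X ⊆ Y) {v' : Option Q} :
    IsExit (contr1δ δ X) (contrSet Y X) x v' ↔ ∃ v, v' = some v ∧ IsExit δ Y x v := by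
  constructor
  · rintro ⟨hv', u', hu', he⟩
    cases u' with
    | none =>
      obtain ⟨v, rfl, hvX, w, hwX, hw⟩ := exists_of_contr1δ_none_eq_some he
      exact ⟨v, rfl, fun hvY => hv' (some_mem_contrSet.mpr ⟨hvY, hvX⟩), w, hXY hwX, hw⟩
    | some u =>
      obtain ⟨huY, huX⟩ := some_mem_contrSet.mp hu'
      obtain ⟨v, hv, rfl⟩ := (contr1δ_some_eq_some huX).mp he
      have hvY : v ∉ Y := fun hvY => hv' ((contrProj_mem_contrSet hXY).mpr hvY)
      exact ⟨v, contrProj_eq_some.mpr ⟨fun hvX => hvY (hXY hvX), rfl⟩, hvY, u, huY, hv⟩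
  · rintro ⟨v, rfl, hvY, u, huY, hu⟩
    have hstep := stepIn_contrProj hX hXY ⟨huY, hu⟩ fun h => hvY (hXY h.2)
    rw [contrProj_eq_some.mpr ⟨fun hvX => hvY (hXY hvX), rfl⟩] at hstep
    exact ⟨fun hv => hvY (some_mem_contrSet.mp hv).1, _, hstep⟩

section Lifting

variable [Finite Q] (hX : IsFsmModule δ s X) (hXY : X ⊆ Y) (htot : ∀ u ∈ X, (δ u x).isSome)
  (hnc : ¬ HasXCycleIn δ x X)
include hX hXY htot hnc

/-- An arc out of `[X]` lifts from every node of `X`: the `x`-arcs inside `X` lead to its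
unique `x`-exit. -/
theorem exists_transGen_stepIn_of_contr1δ {a' b' : Option Q}
    (hab : contr1δ δ X a' x = some b') {a : Q} (ha : a ∈ Y) (hpa : contrProj X a = a') :
    ∃ b, contrProj X b = b' ∧ TransGen (StepIn δ x Y) a b := by
  cases a' with
  | some u =>
    obtain ⟨haX, rfl⟩ := contrProj_eq_some.mp hpa
    obtain ⟨b, hb, rfl⟩ := (contr1δ_some_eq_some haX).mp hab
    exact ⟨b, rfl, .single ⟨ha, hb⟩⟩
  | none =>
    obtain ⟨w, rfl, hw⟩ := exists_of_contr1δ_none_eq_some hab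
    obtain ⟨u, huX, hau, w₀, hw₀X, hw₀⟩ :=
      exists_reflTransGen_stepIn_exit htot hnc (contrProj_eq_none.mp hpa)
    obtain rfl : w₀ = w := (hX.2.2.2 x ⟨w, hw⟩).1 _ _ ⟨hw₀X, u, huX, hw₀⟩ hw
    exact ⟨w₀, contrProj_eq_some.mpr ⟨hw₀X, rfl⟩,
      TransGen.tail' (ReflTransGen.mono (fun _ _ => StepIn.mono hXY) _ _ hau) ⟨hXY huX, hw₀⟩⟩

theorem exists_transGen_stepIn_of_transGen_contr {a' b' : Option Q}
    (h : TransGen (StepIn (contr1δ δ X) x (contrSet Y X)) a' b') {a : Q} (ha : a ∈ Y)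
    (hpa : contrProj X a = a') : ∃ b, contrProj X b = b' ∧ TransGen (StepIn δ x Y) a b := by
  induction h with
  | single hab => exact exists_transGen_stepIn_of_contr1δ hX hXY htot hnc hab.2 ha hpa
  | tail _ hbc ih =>
    obtain ⟨b, hpb, hab⟩ := ih
    obtain ⟨c, hpc, hbc'⟩ := exists_transGen_stepIn_of_contr1δ hX hXY htot hnc hbc.2
      ((contrProj_mem_contrSet hXY).mp (hpb ▸ hbc.1)) hpb
    exact ⟨c, hpc, hab.trans hbc'⟩

end Lifting

theorem not_hasXCycleIn_contr [Finite Q] (hX : IsFsmModule δ s X) (hXY : X ⊆ Y)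
    (htot : ∀ u ∈ Y, (δ u x).isSome) (hnc : ¬ HasXCycleIn δ x Y) :
    ¬ HasXCycleIn (contr1δ δ X) x (contrSet Y X) := by
  rw [hasXCycleIn_iff]
  rintro ⟨q', hq'⟩
  obtain ⟨u, hu⟩ :
      ∃ u, TransGen (StepIn (contr1δ δ X) x (contrSet Y X)) (some u) (some u) := by
    -- `[X]` has no self-loop, so a cycle through it can be rotated to start at a state `some u`
    cases q' with
    | some u => exact ⟨u, hq'⟩
    | none =>
      obtain ⟨c, hc, hcq⟩ := TransGen.head'_iff.mp hq'
      obtain ⟨w, rfl, -⟩ := exists_of_contr1δ_none_eq_some hc.2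
      exact ⟨w, TransGen.tail' hcq hc⟩
  obtain ⟨huY, huX⟩ := some_mem_contrSet.mp (mem_of_transGen_stepIn hu)
  obtain ⟨b, hb, hub⟩ := exists_transGen_stepIn_of_transGen_contr hX hXY
    (fun v hv => htot v (hXY hv)) (fun h => hnc (h.mono hXY)) hu huY
    (contrProj_eq_some.mpr ⟨huX, rfl⟩)
  obtain ⟨-, rfl⟩ := contrProj_eq_some.mp hb
  exact hnc (hasXCycleIn_iff.mpr ⟨b, hub⟩)

theorem not_hasXCycleIn_of_contr (hX : IsFsmModule δ s X) (hXY : X ⊆ Y)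
    (hncX : ¬ HasXCycleIn δ x X) (h : ¬ HasXCycleIn (contr1δ δ X) x (contrSet Y X)) :
    ¬ HasXCycleIn δ x Y := by
  rw [hasXCycleIn_iff]
  rintro ⟨q, hq⟩
  rcases hq.and_or_exists_not (p := fun c d => c ∈ X ∧ d ∈ X) with hqX | ⟨c, d, hqc, hcd, hcdX, hdq⟩
  · exact hncX (hasXCycleIn_iff.mpr ⟨q, TransGen.mono (fun _ _ h => ⟨h.2.1, h.1.2⟩) _ _ hqX⟩)
  · exact h (hasXCycleIn_iff.mpr ⟨contrProj X c, TransGen.head' (stepIn_contrProj hX hXY hcd hcdX)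
      (reflTransGen_contrProj hX hXY (hdq.trans hqc))⟩)

theorem isFsmModule_contr [Finite Q] (hX : IsFsmModule δ s X) (hXY : X ⊆ Y)
    (hY : IsThinModule δ s Y) : IsFsmModule (contr1δ δ X) (contrProj X s) (contrSet Y X) := by
  refine ⟨⟨none, none_mem_contrSet⟩, fun u' v' hu' hv' => ?_, fun hs u' hu' => ?_, ?_⟩
  · obtain ⟨u, rfl, hu⟩ := (isEntrance_contr_iff hXY).mp hu'
    obtain ⟨v, rfl, hv⟩ := (isEntrance_contr_iff hXY).mp hv'
    rw [hY.1.2.1 u v hu hv]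
  · obtain ⟨u, rfl, hu⟩ := (isEntrance_contr_iff hXY).mp hu'
    rw [hY.1.2.2.1 ((contrProj_mem_contrSet hXY).mp hs) u hu]
  · rintro x ⟨v', hv'⟩
    obtain ⟨v, rfl, hv⟩ := (isExit_contr_iff hX hXY).mp hv'
    have hYx := hY.1.2.2.2 x ⟨v, hv⟩
    refine ⟨fun a' b' ha' hb' => ?_, fun u' hu' => ?_⟩
    · obtain ⟨a, rfl, ha⟩ := (isExit_contr_iff hX hXY).mp ha'
      obtain ⟨b, rfl, hb⟩ := (isExit_contr_iff hX hXY).mp hb'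
      rw [hYx.1 a b ha hb]
    · cases u' with
      | none =>
        exact isSome_contr1δ_none.mpr (exists_isExit_of_not_hasXCycleIn hX.1
          (fun u hu => hYx.2 u (hXY hu)) fun h => hY.not_hasXCycleIn ⟨v, hv⟩ (h.mono hXY))
      | some u =>
        obtain ⟨huY, huX⟩ := some_mem_contrSet.mp hu'
        exact (isSome_contr1δ_some huX).mpr (hYx.2 u huY)

theorem isFsmModule_of_contr (hX : IsFsmModule δ s X) (hXY : X ⊆ Y)
    (h : IsFsmModule (contr1δ δ X) (contrProj X s) (contrSet Y X)) : IsFsmModule δ s Y := by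
  have hentr {u : Q} (hu : IsEntrance δ Y u) :
      IsEntrance (contr1δ δ X) (contrSet Y X) (contrProj X u) :=
    (isEntrance_contr_iff hXY).mpr ⟨u, rfl, hu⟩
  have hexit {x : E} {v : Q} (hv : IsExit δ Y x v) :
      IsExit (contr1δ δ X) (contrSet Y X) x (some v) :=
    (isExit_contr_iff hX hXY).mpr ⟨v, rfl, hv⟩
  refine ⟨hX.1.mono hXY, fun u v hu hv => ?_, fun hs u hu => ?_, fun x ⟨v, hv⟩ => ?_⟩
  · rcases contrProj_eq_contrProj.mp (h.2.1 _ _ (hentr hu) (hentr hv)) with ⟨huX, hvX⟩ | huv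
    · exact hX.2.1 u v (hu.of_subset hXY huX) (hv.of_subset hXY hvX)
    · exact huv
  · rcases contrProj_eq_contrProj.mp
        (h.2.2.1 ((contrProj_mem_contrSet hXY).mpr hs) _ (hentr hu)) with ⟨huX, hsX⟩ | hus
    · exact hX.2.2.1 hsX u (hu.of_subset hXY huX)
    · exact hus
  · have hx := h.2.2.2 x ⟨_, hexit hv⟩
    refine ⟨fun a b ha hb => Option.some_injective _ (hx.1 _ _ (hexit ha) (hexit hb)),
      fun u hu => ?_⟩
    by_cases huX : u ∈ X
    · exact (hX.2.2.2 x (isSome_contr1δ_none.mp (hx.2 none none_mem_contrSet))).2 u huX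
    · exact (isSome_contr1δ_some huX).mp (hx.2 (some u) (some_mem_contrSet.mpr ⟨hu, huX⟩))

theorem IsThinModule.contr [Finite Q] (hX : IsFsmModule δ s X) (hXY : X ⊆ Y)
    (hY : IsThinModule δ s Y) : IsThinModule (contr1δ δ X) (contrProj X s) (contrSet Y X) := by
  refine ⟨isFsmModule_contr hX hXY hY, fun x => or_iff_not_imp_left.mpr fun hex => ?_⟩
  obtain ⟨v', hv'⟩ := not_not.mp hex
  obtain ⟨v, -, hv⟩ := (isExit_contr_iff hX hXY).mp hv'
  exact not_hasXCycleIn_contr hX hXY (hY.1.2.2.2 x ⟨v, hv⟩).2 (hY.not_hasXCycleIn ⟨v, hv⟩)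

theorem IsThinModule.of_contr (hX : IsThinModule δ s X) (hXY : X ⊆ Y)
    (h : IsThinModule (contr1δ δ X) (contrProj X s) (contrSet Y X)) : IsThinModule δ s Y := by
  refine ⟨isFsmModule_of_contr hX.1 hXY h.1, fun x => or_iff_not_imp_left.mpr fun hex => ?_⟩
  obtain ⟨v, hv⟩ := not_not.mp hex
  have hex' : ∃ v', IsExit (contr1δ δ X) (contrSet Y X) x v' :=
    ⟨_, (isExit_contr_iff hX.1 hXY).mpr ⟨v, rfl, hv⟩⟩
  have hXexit : ∃ w, IsExit δ X x w :=
    isSome_contr1δ_none.mp ((h.1.2.2.2 x hex').2 none none_mem_contrSet)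
  exact not_hasXCycleIn_of_contr hX.1 hXY (hX.not_hasXCycleIn hXexit) (h.not_hasXCycleIn hex')

end Contraction

theorem stmt5_general [Fintype Q] (δ : Q → E → Option Q) (s : Q)
    (X : Set Q) (hX : IsThinModule δ s X) (Y : Set Q) (hXY : X ⊆ Y) :
    IsThinModule δ s Y ↔
      IsThinModule (contr1δ δ X) (if s ∈ X then none else some s) (contrSet Y X) :=
  ⟨fun hY => hY.contr hX.1 hXY, hX.of_contr hXY⟩

/-- Let `Z` be an accessible FSM, `X` a thin module of `Z` and
`Y ⊇ X`. Then `Y` is a thin module of `Z` iff `Y/X` is a thin module of `Z/X`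
(whose start state is `s` if `s ∉ X`, and `[X]` otherwise). -/
theorem stmt5 [Fintype Q] (δ : Q → E → Option Q) (s : Q) (hacc : Accessible δ s)
    (X : Set Q) (hX : IsThinModule δ s X) (Y : Set Q) (hXY : X ⊆ Y) :
    IsThinModule δ s Y ↔
      IsThinModule (contr1δ δ X) (if s ∈ X then none else some s) (contrSet Y X) :=
  stmt5_general δ s X hX Y hXY
end

section
/- Let Z be an accessible FSM and M a module of Z with start node σ. Then every node of M is reachable from σ by a directed path in Z. -/
/-
Follow a path from `s` to `m ∈ M`. If it enters `M` from outside at some point, the node where it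
last does so is an entrance of `M`, hence the start node `σ`, and the rest of the path stays in `M`.
If it never does, the path lies in `M` throughout, so `s ∈ M` and again `σ = s`.
-/

open Classical

universe u v

variable {Q : Type u} {E : Type v}

theorem IsStartNode.eq_of_isEntrance {δ : Q → E → Option Q} {s : Q} {M : Set Q} {σ u : Q}
    (hM : IsFsmModule δ s M) (hσ : IsStartNode δ s M σ) (hu : IsEntrance δ M u) : u = σ := by
  rcases hσ with ⟨hsM, rfl⟩ | ⟨-, hσ⟩
  · exact hM.2.2.1 hsM u hu
  · exact hM.2.1 u σ hu hσ

theorem IsStartNode.reaches_of_reaches_start {δ : Q → E → Option Q} {s : Q} {M : Set Q}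
    {σ q : Q} (hM : IsFsmModule δ s M) (hσ : IsStartNode δ s M σ) (hq : Reaches δ s q) :
    q ∈ M → Reaches δ σ q := by
  induction hq with
  | refl =>
    intro hsM
    rcases hσ with ⟨-, rfl⟩ | ⟨hs, -⟩
    · exact Relation.ReflTransGen.refl
    · exact absurd hsM hs
  | @tail b c _ hbc ih =>
    intro hc
    by_cases hb : b ∈ M
    · exact (ih hb).tail hbc
    · obtain ⟨x, hx⟩ := hbc
      rw [hσ.eq_of_isEntrance hM ⟨hc, x, b, hb, hx⟩]
      exact Relation.ReflTransGen.refl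

theorem stmt7_general (δ : Q → E → Option Q) (s : Q) (hacc : Accessible δ s)
    (M : Set Q) (hM : IsFsmModule δ s M) (σ : Q) (hσ : IsStartNode δ s M σ) :
    ∀ m ∈ M, Reaches δ σ m :=
  fun m hm => hσ.reaches_of_reaches_start hM (hacc m) hm

/-- In an accessible FSM, every node of a module `M` is reachable
by a directed path from the start node `σ` of `M`. -/
theorem stmt7 [Fintype Q] (δ : Q → E → Option Q) (s : Q) (hacc : Accessible δ s)
    (M : Set Q) (hM : IsFsmModule δ s M) (σ : Q) (hσ : IsStartNode δ s M σ) :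
    ∀ m ∈ M, Reaches δ σ m :=
  stmt7_general δ s hacc M hM σ hσ
end

section
/- Let X be a finite set and F a family of subsets of X such that whenever A, B ∈ F are overlapping, A ∪ B ∈ F. Then a set M belongs to F if and only if M is the union of an overlapping collection of indecomposable elements of F. -/
/-!
Backward direction: in a finite overlapping collection of members of `F`, a maximal
subcollection whose union lies in `F` is everything, since otherwise some outside member
meets that union, and two members of `F` that meet are nested or overlap.

Forward direction: by well-founded induction on `M`, split a decomposable `M` into
proper subsets and decompose them further. The pieces glue to an overlapping collection
because an overlap between two unions of overlapping collections always comes from an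
overlap between two of their members.
-/

section

variable {α : Type*}

theorem Overlap.symm {a b : Set α} (h : Overlap a b) : Overlap b a :=
  ⟨Set.inter_comm a b ▸ h.1, h.2.2, h.2.1⟩

theorem subset_or_subset_of_not_overlap {a b : Set α} (h : ¬ Overlap a b)
    (hab : (a ∩ b).Nonempty) : a ⊆ b ∨ b ⊆ a := by
  by_contra hc
  push Not at hc
  exact h ⟨hab, hc⟩

theorem union_mem_of_inter_nonempty {F : Set (Set α)}
    (hcl : ∀ A B, A ∈ F → B ∈ F → Overlap A B → A ∪ B ∈ F) {A B : Set α}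
    (hA : A ∈ F) (hB : B ∈ F) (hAB : (A ∩ B).Nonempty) : A ∪ B ∈ F := by
  by_cases hAB' : Overlap A B
  · exact hcl A B hA hB hAB'
  · rcases subset_or_subset_of_not_overlap hAB' hAB with h | h
    · rwa [Set.union_eq_right.2 h]
    · rwa [Set.union_eq_left.2 h]

namespace OverlapColl

theorem of_subsingleton {S : Set (Set α)} (hS : S.Subsingleton) : OverlapColl S := by
  rintro T hTS ⟨t, ht⟩ ⟨s, hs, hsT⟩
  exact absurd (hS (hTS ht) hs ▸ ht) hsT

theorem ssubset_sUnion {S : Set (Set α)} (hS : OverlapColl S) (hS₂ : S.Nontrivial) {A : Set α}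
    (hA : A ∈ S) : A ⊂ ⋃₀ S := by
  obtain ⟨_, rfl, c, ⟨hc, -⟩, hAc⟩ :=
    hS {A} (Set.singleton_subset_iff.2 hA) (Set.singleton_nonempty A) (hS₂.exists_ne A)
  exact (Set.subset_sUnion_of_mem hA).ssubset_of_not_subset
    fun h => hAc.2.2 ((Set.subset_sUnion_of_mem hc).trans h)

theorem exists_overlap_of_overlap_sUnion {S : Set (Set α)} (hS : OverlapColl S) {B : Set α}
    (hB : Overlap B (⋃₀ S)) : ∃ a ∈ S, Overlap B a := by
  by_contra! hnot
  obtain ⟨⟨x, hxB, a, ha, hxa⟩, hBS, hSB⟩ := hB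
  -- Every member lies inside `B` or misses it, and an overlapping collection cannot mix both.
  have hinside : ∀ a ∈ S, (B ∩ a).Nonempty → a ⊆ B := fun a ha hBa =>
    (subset_or_subset_of_not_overlap (hnot a ha) hBa).resolve_left
      fun h => hBS (h.trans (Set.subset_sUnion_of_mem ha))
  have hout : (S \ {a ∈ S | a ⊆ B}).Nonempty := by
    by_contra! h
    exact hSB (Set.sUnion_subset fun a ha => by
      by_contra haB
      exact h.subset ⟨ha, fun h' => haB h'.2⟩)
  obtain ⟨c, ⟨-, hcB⟩, d, ⟨hd, hdB⟩, ⟨y, hyc, hyd⟩, -⟩ :=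
    hS _ (Set.sep_subset _ _) ⟨a, ha, hinside a ha ⟨x, hxB, hxa⟩⟩ hout
  exact hdB ⟨hd, hinside d hd ⟨y, hcB hyc, hyd⟩⟩

theorem exists_overlap_of_overlap_sUnion_sUnion {S T : Set (Set α)} (hS : OverlapColl S)
    (hT : OverlapColl T) (h : Overlap (⋃₀ S) (⋃₀ T)) : ∃ a ∈ S, ∃ b ∈ T, Overlap a b := by
  obtain ⟨b, hb, hSb⟩ := hT.exists_overlap_of_overlap_sUnion h
  obtain ⟨a, ha, hba⟩ := hS.exists_overlap_of_overlap_sUnion hSb.symm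
  exact ⟨a, ha, b, hb, hba.symm⟩

theorem biUnion {S : Set (Set α)} (hS : OverlapColl S) {f : Set α → Set (Set α)}
    (hf : ∀ A ∈ S, OverlapColl (f A)) (hf_sUnion : ∀ A ∈ S, ⋃₀ f A = A) :
    OverlapColl (⋃ A ∈ S, f A) := by
  intro T hT hTne hTcompl
  by_cases hsplit : ∃ A ∈ S, (f A ∩ T).Nonempty ∧ ¬ f A ⊆ T
  · obtain ⟨A, hA, hAT, hAnT⟩ := hsplit
    have hrest : (f A \ (f A ∩ T)).Nonempty := by
      obtain ⟨b, hb, hbT⟩ := Set.not_subset.1 hAnT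
      exact ⟨b, hb, fun h => hbT h.2⟩
    obtain ⟨a, ⟨-, haT⟩, b, ⟨hb, hbT⟩, hab⟩ := hf A hA _ Set.inter_subset_left hAT hrest
    exact ⟨a, haT, b, ⟨Set.mem_biUnion hA hb, fun h => hbT ⟨hb, h⟩⟩, hab⟩
  push Not at hsplit
  obtain ⟨t, htT⟩ := hTne
  obtain ⟨A, hA, htA⟩ := Set.mem_iUnion₂.1 (hT htT)
  obtain ⟨s, hs, hsT⟩ := hTcompl
  obtain ⟨B, hB, hsB⟩ := Set.mem_iUnion₂.1 hs
  obtain ⟨A', ⟨hA', hA'T⟩, B', ⟨hB', hB'T⟩, hA'B'⟩ :=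
    hS {A ∈ S | (f A ∩ T).Nonempty} (Set.sep_subset _ _) ⟨A, hA, t, htA, htT⟩
      ⟨B, hB, fun h => hsT (hsplit B hB h.2 hsB)⟩
  obtain ⟨a, ha, b, hb, hab⟩ := exists_overlap_of_overlap_sUnion_sUnion (hf A' hA')
    (hf B' hB') (by rwa [hf_sUnion A' hA', hf_sUnion B' hB'])
  exact ⟨a, hsplit A' hA' hA'T ha, b, ⟨Set.mem_biUnion hB' hb, fun hbT => hB'T ⟨hB', b, hb, hbT⟩⟩,
    hab⟩

theorem sUnion_mem {F : Set (Set α)}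
    (hcl : ∀ A B, A ∈ F → B ∈ F → Overlap A B → A ∪ B ∈ F) {S : Set (Set α)}
    (hS : OverlapColl S) (hfin : S.Finite) (hne : S.Nonempty) (hSF : S ⊆ F) : ⋃₀ S ∈ F := by
  obtain ⟨A, hA⟩ := hne
  obtain ⟨T, ⟨hTS, ⟨a, haT⟩, hTF⟩, hTmax⟩ :=
    (hfin.finite_subsets.subset fun T hT => hT.1 :
      {T | T ⊆ S ∧ T.Nonempty ∧ ⋃₀ T ∈ F}.Finite).exists_maximal
      ⟨{A}, Set.singleton_subset_iff.2 hA, Set.singleton_nonempty A, by simpa using hSF hA⟩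
  by_cases hST : S ⊆ T
  · rwa [← hTS.antisymm hST]
  obtain ⟨a, haT, b, ⟨hbS, hbT⟩, ⟨x, hxa, hxb⟩, -⟩ :=
    hS T hTS ⟨a, haT⟩ (Set.nonempty_of_not_subset hST)
  have hinsert : ⋃₀ insert b T ∈ F := by
    rw [Set.sUnion_insert]
    exact union_mem_of_inter_nonempty hcl (hSF hbS) hTF ⟨x, hxb, a, haT, hxa⟩
  exact (hbT <| hTmax ⟨Set.insert_subset hbS hTS, Set.insert_nonempty b T, hinsert⟩
    (Set.subset_insert b T) (Set.mem_insert b T)).elim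

end OverlapColl

theorem exists_overlapColl_indecomposable_of_mem [Finite α] {F : Set (Set α)} {M : Set α}
    (hM : M ∈ F) : ∃ S : Set (Set α), S.Nonempty ∧ (∀ A ∈ S, Indecomposable F A) ∧
      OverlapColl S ∧ ⋃₀ S = M := by
  induction M using WellFoundedLT.induction with
  | ind M ih =>
  by_cases hdec : Decomposable F M
  · obtain ⟨S, hSF, hS, rfl, hS₂ : S.Nontrivial⟩ := hdec
    choose! f hf_ne hf_ind hf hf_sUnion using
      fun A hA => ih A (hS.ssubset_sUnion hS₂ hA) (hSF hA)
    refine ⟨⋃ A ∈ S, f A, ?_, ?_, hS.biUnion hf hf_sUnion, ?_⟩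
    · obtain ⟨a, ha⟩ := hS₂.nonempty
      obtain ⟨c, hc⟩ := hf_ne a ha
      exact ⟨c, Set.mem_biUnion ha hc⟩
    · intro B hB
      obtain ⟨A, hA, hBA⟩ := Set.mem_iUnion₂.1 hB
      exact hf_ind A hA B hBA
    · simp only [Set.sUnion_iUnion]
      exact (Set.iUnion₂_congr hf_sUnion).trans Set.sUnion_eq_biUnion.symm
  · refine ⟨{M}, Set.singleton_nonempty M, ?_, OverlapColl.of_subsingleton
      Set.subsingleton_singleton, Set.sUnion_singleton M⟩
    simpa using ⟨hM, hdec⟩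

end

/-- Let `F` be a family of subsets of a finite set which is
closed under unions of overlapping pairs. Then `M ∈ F` iff `M` is the union of a
(nonempty) overlapping collection of indecomposable elements of `F`. -/
theorem stmt10 {α : Type*} [Fintype α] (F : Set (Set α))
    (hcl : ∀ A B, A ∈ F → B ∈ F → Overlap A B → A ∪ B ∈ F) (M : Set α) :
    M ∈ F ↔
      ∃ S : Set (Set α), S.Nonempty ∧ (∀ A ∈ S, Indecomposable F A) ∧
        OverlapColl S ∧ ⋃₀ S = M := by
  refine ⟨exists_overlapColl_indecomposable_of_mem, ?_⟩
  rintro ⟨S, hne, hind, hS, rfl⟩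
  exact hS.sUnion_mem hcl S.toFinite hne fun A hA => (hind A hA).1
end
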